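/- In the Setting, every edge u_i v_i ∈ E_0 (1 ≤ i ≤ n) is an isolated vertex of the conflict graph H*; that is, the edge u_i v_i of H is in conflict with no edge of H. -/

import Mathlib

open SimpleGraph

/-- Two edges `e`, `f` of a simple graph `G` are *in conflict* (written `e ‖ f` in the paper):
their endpoints can be written `e = v₁v₂`, `f = v₃v₄` with `v₁v₄ ∉ E` and `v₂v₃ ∉ E`,
so that the four (distinct) vertices build an alternating cycle `AC₄`
(one of `2K₂`, `P₄`, `C₄`). -/
def Sym2Conflict {V : Type*} (G : SimpleGraph V) (e f : Sym2 V) : Prop :=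
  ∃ a b c d : V, e = s(a, b) ∧ f = s(c, d) ∧
    G.Adj a b ∧ G.Adj c d ∧ ¬ G.Adj a d ∧ ¬ G.Adj b c ∧
    a ≠ c ∧ a ≠ d ∧ b ≠ c ∧ b ≠ d

/-- The conflict graph `G*` of `G` (whose vertices are the edges of `G`, two of them adjacent
iff the corresponding edges are in conflict) is bipartite, i.e. `χ(G*) ≤ 2`:
there is a `2`-coloring of the edges of `G` such that conflicting edges get different colors. -/
def ConflictGraphBipartite {V : Type*} (G : SimpleGraph V) : Prop :=
  ∃ χ : Sym2 V → Bool, ∀ e f, Sym2Conflict G e f → χ e ≠ χ f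

/-- `χ` is a proper 2-coloring of the vertices of the conflict graph `G*`. -/
def ProperConflictColoring {V : Type*} (G : SimpleGraph V) (χ : Sym2 V → Bool) : Prop :=
  ∀ e f, Sym2Conflict G e f → χ e ≠ χ f

/-- `e` and `f` lie in the same connected component of the conflict graph `G*`. -/
def SameComp {V : Type*} (G : SimpleGraph V) (e f : Sym2 V) : Prop :=
  Relation.ReflTransGen (Sym2Conflict G) e f

/-- The literals of `e` and `f` (w.r.t. the proper 2-coloring `χ` of the conflict graph)
are equal: same connected component of `G*` and same color. -/
def SameLit {V : Type*} (G : SimpleGraph V) (χ : Sym2 V → Bool) (e f : Sym2 V) : Prop :=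
  SameComp G e f ∧ χ e = χ f

/-- The literal of `e` is the negation of the literal of `f`: same connected component of the
conflict graph `G*`, different colors. -/
def OppLit {V : Type*} (G : SimpleGraph V) (χ : Sym2 V → Bool) (e f : Sym2 V) : Prop :=
  SameComp G e f ∧ χ e ≠ χ f

/-- Six (not necessarily distinct) vertices `v₁,…,v₆` build an alternating cycle `AC₆` in `G`:
`v₁v₂, v₃v₄, v₅v₆ ∉ E` and `v₂v₃, v₄v₅, v₆v₁ ∈ E`. -/
def IsAC6 {V : Type*} (G : SimpleGraph V) (v1 v2 v3 v4 v5 v6 : V) : Prop :=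
  ¬ G.Adj v1 v2 ∧ ¬ G.Adj v3 v4 ∧ ¬ G.Adj v5 v6 ∧
    G.Adj v2 v3 ∧ G.Adj v4 v5 ∧ G.Adj v6 v1

/-- `G` has an alternating cycle `AC_{2k}` in the edge subset `F`:
`2k` (not necessarily distinct) vertices `w 0, …, w (2k-1)` with
`w i — w (i+1)` an edge of `F` for odd `i` and a non-edge of `G` for even `i`
(indices mod `2k`). -/
def HasAltCycle {V : Type*} (G : SimpleGraph V) (F : Set (Sym2 V)) (k : ℕ) : Prop :=
  ∃ w : ℕ → V, ∀ i < 2 * k,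
    (Odd i → s(w i, w ((i + 1) % (2 * k))) ∈ F) ∧
    (Even i → ¬ G.Adj (w i) (w ((i + 1) % (2 * k))))

/-- `G` is a threshold graph: there are real weights `a` with `uv ∈ E ↔ a u + a v ≥ 1`
for all distinct `u`, `v`. -/
def IsThresholdGraph {V : Type*} (G : SimpleGraph V) : Prop :=
  ∃ a : V → ℝ, ∀ u v : V, u ≠ v → (G.Adj u v ↔ 1 ≤ a u + a v)

/-- The edge set of `G` is the union of the edge sets of `k` threshold graphs on `V`. -/
def HasThresholdCover {V : Type*} (G : SimpleGraph V) (k : ℕ) : Prop :=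
  ∃ f : Fin k → SimpleGraph V, (∀ i, IsThresholdGraph (f i)) ∧
    ∀ u v, G.Adj u v ↔ ∃ i, (f i).Adj u v

/-- The threshold cover number `t(G)`: the smallest (positive) `k` such that the edge set
of `G` is the union of the edge sets of `k` threshold graphs. -/
noncomputable def thresholdCoverNumber {V : Type*} (G : SimpleGraph V) : ℕ :=
  sInf {k | 0 < k ∧ HasThresholdCover G k}

/-- A bipartite graph, given as a relation `E : α → β → Prop` between its two color classes,
is a *chain graph*: the neighborhoods of any two vertices in the same color class are
comparable under inclusion. -/
def IsChainRel {α β : Type*} (E : α → β → Prop) : Prop :=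
  (∀ a a' : α, (∀ b, E a b → E a' b) ∨ (∀ b, E a' b → E a b)) ∧
  (∀ b b' : β, (∀ a, E a b → E a b') ∨ (∀ a, E a b' → E a b))

/-- The edge set of the bipartite graph `E` is the union of the edge sets of `k` chain graphs. -/
def HasChainCover {α β : Type*} (E : α → β → Prop) (k : ℕ) : Prop :=
  ∃ f : Fin k → α → β → Prop, (∀ i, IsChainRel (f i)) ∧
    ∀ a b, E a b ↔ ∃ i, f i a b

/-- The chain cover number `ch(G)` of a bipartite graph. -/
noncomputable def chainCoverNumber {α β : Type*} (E : α → β → Prop) : ℕ :=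
  sInf {k | 0 < k ∧ HasChainCover E k}

/-- `G` is a split graph: its vertex set can be partitioned into a clique and an
independent set. -/
def IsSplitGraph {V : Type*} (G : SimpleGraph V) : Prop :=
  ∃ K : Set V, (∀ u ∈ K, ∀ v ∈ K, u ≠ v → G.Adj u v) ∧
    ∀ u ∉ K, ∀ v ∉ K, ¬ G.Adj u v

/-- `P` is an interval order: each element gets a real interval `[l x, r x]` such that
`P x y` iff the interval of `x` lies entirely to the left of the interval of `y`. -/
def IsIntervalOrder {U : Type*} (P : U → U → Prop) : Prop :=
  ∃ l r : U → ℝ, (∀ x, l x ≤ r x) ∧ ∀ x y, P x y ↔ r x < l y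

/-- `P` is a (strict) partial order: irreflexive and transitive. -/
def IsPartialOrderRel {U : Type*} (P : U → U → Prop) : Prop :=
  (∀ x, ¬ P x x) ∧ ∀ x y z, P x y → P y z → P x z

/-- `P` is a linear order: a partial order in which any two distinct elements are comparable. -/
def IsLinearOrderRel {U : Type*} (P : U → U → Prop) : Prop :=
  IsPartialOrderRel P ∧ ∀ x y : U, x ≠ y → P x y ∨ P y x

/-- A bipartite graph `E` on color classes `U = V = Fin n` (containing the perfect matching
`E₀ = {uᵢvᵢ}`) is *linear-interval coverable*: `E = E₁ ∪ E₂` for chain graphs `E₁`, `E₂`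
with `E₀ ⊆ E₂ \ E₁`. -/
def LinearIntervalCoverable (n : ℕ) (E : Fin n → Fin n → Prop) : Prop :=
  ∃ E1 E2 : Fin n → Fin n → Prop,
    IsChainRel E1 ∧ IsChainRel E2 ∧ (∀ i j, E i j ↔ E1 i j ∨ E2 i j) ∧
    ∀ i, E2 i i ∧ ¬ E1 i i

/-- The associated split graph `H_G` of a bipartite graph `G = (α, β, E)`:
the graph on `α ⊕ β` obtained from `G` by turning the color class `β` into a clique. -/
def assocSplitGraph {α β : Type*} (E : α → β → Prop) : SimpleGraph (α ⊕ β) where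
  Adj x y := match x, y with
    | Sum.inl _, Sum.inl _ => False
    | Sum.inl a, Sum.inr b => E a b
    | Sum.inr b, Sum.inl a => E a b
    | Sum.inr b, Sum.inr b' => b ≠ b'
  symm := by
    refine ⟨?_⟩
    rintro (a | b) (a' | b') h
    · exact h
    · exact h
    · exact h
    · exact Ne.symm h
  loopless := by
    refine ⟨?_⟩
    rintro (a | b) h
    · exact h
    · exact h rfl

/-- The split graph `H` of the Setting: the associated split graph of `G̃ = Ĉ(P)`,
the bipartite complement of the domination bipartite graph of `P`. -/
def paperH {n : ℕ} (P : Fin n → Fin n → Prop) : SimpleGraph (Fin n ⊕ Fin n) :=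
  assocSplitGraph (fun i j : Fin n => ¬ P i j)

/-- The split graph `H − E₀` of the Setting: `H` with the perfect matching
`E₀ = {uᵢvᵢ}` deleted. -/
def paperHminusE0 {n : ℕ} (P : Fin n → Fin n → Prop) : SimpleGraph (Fin n ⊕ Fin n) :=
  assocSplitGraph (fun i j : Fin n => ¬ P i j ∧ i ≠ j)

/-- `G` has an `AP₅`: an `AC₆` with `vᵢ = vᵢ₊₃` for some `i`, having exactly five
distinct vertices. -/
def HasAP5 {V : Type*} [DecidableEq V] (G : SimpleGraph V) : Prop :=
  ∃ v1 v2 v3 v4 v5 v6 : V,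
    (v1 = v4 ∨ v2 = v5 ∨ v3 = v6) ∧
    ({v1, v2, v3, v4, v5, v6} : Finset V).card = 5 ∧
    IsAC6 G v1 v2 v3 v4 v5 v6

/-- `G` has a double `AP₆`: an `AP₆` (an `AC₆` on six distinct vertices) containing in
addition the edges `v₁v₃, v₂v₆`, or `v₃v₅, v₄v₂`, or `v₅v₁, v₆v₄`. -/
def HasDoubleAP6 {V : Type*} (G : SimpleGraph V) : Prop :=
  ∃ v1 v2 v3 v4 v5 v6 : V,
    List.Pairwise (· ≠ ·) [v1, v2, v3, v4, v5, v6] ∧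
    IsAC6 G v1 v2 v3 v4 v5 v6 ∧
    ((G.Adj v1 v3 ∧ G.Adj v2 v6) ∨ (G.Adj v3 v5 ∧ G.Adj v4 v2) ∨
      (G.Adj v5 v1 ∧ G.Adj v6 v4))

theorem Sym2Conflict.exists_of_mk {V : Type*} {G : SimpleGraph V} {x y : V} {f : Sym2 V}
    (h : Sym2Conflict G s(x, y) f) :
    ∃ c d, f = s(c, d) ∧ G.Adj x y ∧ G.Adj c d ∧ ¬ G.Adj x d ∧ ¬ G.Adj y c ∧
      x ≠ c ∧ x ≠ d ∧ y ≠ c ∧ y ≠ d := by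
  obtain ⟨a, b, c, d, he, hf, hab, hcd, had, hbc, hac, hadn, hbcn, hbd⟩ := h
  rcases Sym2.eq_iff.mp he with ⟨rfl, rfl⟩ | ⟨rfl, rfl⟩
  · exact ⟨c, d, hf, hab, hcd, had, hbc, hac, hadn, hbcn, hbd⟩
  · -- read both edges backwards: `s(b, a)` and `s(d, c)` form the same alternating cycle
    exact ⟨d, c, hf.trans Sym2.eq_swap, hab.symm, hcd.symm, hbc, had, hbd, hbcn, hadn, hac⟩

/-- In `H_G` the only candidates for a conflict partner of the edge `ab` are edges `a'b'` with
`a'b, ab' ∉ E`, because `b` is adjacent to every other vertex of the clique `β`. -/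
theorem assocSplitGraph_not_sym2Conflict_inl_inr {α β : Type*} {E : α → β → Prop} {a : α}
    {b : β} (h : ∀ a' b', ¬ E a b' → ¬ E a' b → ¬ E a' b') (f : Sym2 (α ⊕ β)) :
    ¬ Sym2Conflict (assocSplitGraph E) s(Sum.inl a, Sum.inr b) f := by
  intro hconf
  obtain ⟨c, d, -, -, hcd, had, hbc, -, -, hbc_ne, -⟩ := hconf.exists_of_mk
  rcases c with a' | b'
  · rcases d with a'' | b''
    · exact hcd
    · exact h a' b'' had hbc hcd
  · exact hbc (ne_of_apply_ne Sum.inr hbc_ne)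

/-- Lemma: every edge `uᵢvᵢ ∈ E₀` is an isolated vertex of the conflict
graph `H*`, i.e. the edge `uᵢvᵢ` of `H` is in conflict with no edge of `H`. -/
theorem statement_7 {n : ℕ} (P : Fin n → Fin n → Prop) (hP : IsPartialOrderRel P)
    (i : Fin n) (f : Sym2 (Fin n ⊕ Fin n)) :
    ¬ Sym2Conflict (paperH P) s(Sum.inl i, Sum.inr i) f :=
  assocSplitGraph_not_sym2Conflict_inl_inr
    (fun k l hil hki hkl => hkl (hP.2 k i l (not_not.mp hki) (not_not.mp hil))) f
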